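/- (Core inequalities in the theorem of Section 6.5: a right-dominant unconditional basis almost-isometrically controls disjointly supported sequences by single basis vectors.) Let κ, K, D ≥ 1 and let N be a normalized K-unconditional coefficient quasi-norm satisfying N(f + g) ≤ κ·(N(f) + N(g)) for all finitely supported f, g. Assume N is right D-dominant: whenever (f_i)_{i=1}^k and (g_i)_{i=1}^k are families of finitely supported functions, each family having pairwise disjoint supports, such that for every i one has max(supp g_i) < min(supp f_i) and N(f_i) ≤ N(g_i), then N(∑_i f_i) ≤ D·N(∑_i g_i). Let u_1, …, u_M be nonzero finitely supported functions with pairwise disjoint supports and 0 < a ≤ N(u_m) ≤ b for all m; set j_m = min(supp u_m) and k_m = max(supp u_m). Then for all scalars c_1, …, c_M: N(∑_m c_m·u_m) ≤ 2κK²Db·N(∑_m c_m·e_{j_m}) and N(∑_m c_m·u_m) ≥ (a/(2κ²KD))·N(∑_m c_m·e_{k_m}). -/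

import Mathlib

/-- A normalized `K`-unconditional coefficient quasi-norm on finitely supported
real sequences. -/
structure IsCoeffQuasiNorm (K : ℝ) (N : (ℕ →₀ ℝ) → ℝ) : Prop where
  nonneg : ∀ f, 0 ≤ N f
  eq_zero_iff : ∀ f, N f = 0 ↔ f = 0
  smul : ∀ (t : ℝ) (f : ℕ →₀ ℝ), N (t • f) = |t| * N f
  normalized : ∀ n : ℕ, N (Finsupp.single n 1) = 1
  uncond : ∀ f g : ℕ →₀ ℝ, (∀ n, |f n| ≤ |g n|) → N f ≤ K * N g

/-!
Split each `u_m` at the left end `j_m` of its support, `u_m = u_m(j_m) e_{j_m} + r_m`. Since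
`|u_m(j_m)| ≤ K N(u_m) ≤ K b`, unconditionality bounds the first parts by `K b ∑ c_m e_{j_m}`;
the rests `r_m` lie strictly to the right of `j_m` and have `N(r_m) ≤ K b`, so right dominance
bounds them by the same vector. Gluing the two with the modulus of concavity and using
`K + D ≤ 2KD` gives the upper estimate.

For the lower estimate split at the right end `k_m` instead. Now
`a / κ ≤ |u_m(k_m)| + N(r_m)`, so `a / κ` can be distributed between the two parts; the share of
`|u_m(k_m)|` is handled by unconditionality, and that of `N(r_m)` by dominance, this time with the
singletons `e_{k_m}` to the right of the rests `r_m`.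
-/

open Finset Function

def IsRightDominant (N : (ℕ →₀ ℝ) → ℝ) (D : ℝ) : Prop :=
  ∀ (k : ℕ) (f g : Fin k → (ℕ →₀ ℝ)),
    Pairwise (Disjoint on fun i => (f i).support) →
    Pairwise (Disjoint on fun i => (g i).support) →
    (∀ i, ∀ m ∈ (g i).support, ∀ n ∈ (f i).support, m < n) →
    (∀ i, N (f i) ≤ N (g i)) →
    N (∑ i, f i) ≤ D * N (∑ i, g i)

lemma abs_sum_apply_le_of_pairwise_disjoint {ι α : Type*} [Fintype ι] {p v : ι → α →₀ ℝ}
    (hv : Pairwise (Disjoint on fun i => (v i).support)) (h : ∀ i n, |p i n| ≤ |v i n|)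
    (n : α) : |(∑ i, p i) n| ≤ |(∑ i, v i) n| := by
  have hp : ∀ i, v i n = 0 → p i n = 0 := fun i hi =>
    abs_nonpos_iff.mp ((h i n).trans_eq (by rw [hi, abs_zero]))
  rw [Finsupp.finsetSum_apply, Finsupp.finsetSum_apply]
  by_cases hn : ∃ i, n ∈ (v i).support
  · obtain ⟨i₀, hi₀⟩ := hn
    have hv₀ : ∀ i ≠ i₀, v i n = 0 := fun i hi =>
      Finsupp.notMem_support_iff.mp (Finset.disjoint_right.mp (hv hi) hi₀)
    rw [sum_eq_single_of_mem i₀ (mem_univ _) (fun i _ hi => hp i (hv₀ i hi)),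
      sum_eq_single_of_mem i₀ (mem_univ _) (fun i _ => hv₀ i)]
    exact h i₀ n
  · push Not at hn
    have hv₀ : ∀ i, v i n = 0 := fun i => Finsupp.notMem_support_iff.mp (hn i)
    simp [hv₀, fun i => hp i (hv₀ i)]

lemma pairwise_disjoint_support_single {ι α M : Type*} [Zero M] {k : ι → α} (hk : Injective k)
    (x : ι → M) :
    Pairwise (Disjoint on fun i => (Finsupp.single (k i) (x i)).support) := fun _ _ hij =>
  (Finset.disjoint_singleton.mpr (hk.ne hij)).mono
    Finsupp.support_single_subset Finsupp.support_single_subset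

lemma injective_of_mem_support {ι α M : Type*} [Zero M] {u : ι → α →₀ M}
    (hu : Pairwise (Disjoint on fun i => (u i).support)) {k : ι → α}
    (hk : ∀ i, k i ∈ (u i).support) : Injective k := fun i j hij => by
  by_contra hne
  exact Finset.disjoint_left.mp (hu hne) (hk i) (hij ▸ hk j)

lemma Finsupp.mem_support_smul_erase {α M R : Type*} [DecidableEq α] [Zero M]
    [SMulZeroClass R M] {f : α →₀ M} {c : R} {n m : α}
    (h : m ∈ (c • f.erase n).support) : m ≠ n ∧ m ∈ f.support := by
  have := Finsupp.support_smul h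
  rwa [Finsupp.support_erase, Finset.mem_erase] at this

lemma pairwise_disjoint_support_smul_erase {ι α M R : Type*} [DecidableEq α] [Zero M]
    [SMulZeroClass R M] {u : ι → α →₀ M} (hu : Pairwise (Disjoint on fun i => (u i).support))
    (c : ι → R) (k : ι → α) :
    Pairwise (Disjoint on fun i => (c i • (u i).erase (k i)).support) := fun _ _ h =>
  (hu h).mono (fun _ hn => (Finsupp.mem_support_smul_erase hn).2)
    (fun _ hn => (Finsupp.mem_support_smul_erase hn).2)

lemma exists_abs_le_add_eq {s x y : ℝ} (hs : 0 ≤ s) (hx : 0 ≤ x) (hy : 0 ≤ y)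
    (h : s ≤ x + y) : ∃ x' y', |x'| ≤ x ∧ |y'| ≤ y ∧ x' + y' = s := by
  refine ⟨min x s, s - min x s, ?_, ?_, by ring⟩
  · rw [abs_of_nonneg (le_min hx hs)]
    exact min_le_left x s
  · rw [abs_of_nonneg (sub_nonneg.mpr (min_le_right x s))]
    rcases le_total x s with hxs | hxs
    · rw [min_eq_left hxs]; linarith
    · rw [min_eq_right hxs, sub_self]; exact hy

namespace IsCoeffQuasiNorm

variable {K κ : ℝ} {N : (ℕ →₀ ℝ) → ℝ}

lemma map_zero (hN : IsCoeffQuasiNorm K N) : N 0 = 0 := (hN.eq_zero_iff 0).mpr rfl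

lemma single (hN : IsCoeffQuasiNorm K N) (n : ℕ) (x : ℝ) : N (Finsupp.single n x) = |x| := by
  rw [← Finsupp.smul_single_one, hN.smul, hN.normalized, mul_one]

lemma one_le (hN : IsCoeffQuasiNorm K N) : 1 ≤ K := by
  simpa [hN.normalized] using
    hN.uncond (Finsupp.single 0 1) (Finsupp.single 0 1) fun _ => le_rfl

lemma one_le_of_add_le (hN : IsCoeffQuasiNorm K N)
    (hquasi : ∀ f g, N (f + g) ≤ κ * (N f + N g)) : 1 ≤ κ := by
  simpa [hN.map_zero, hN.normalized] using hquasi (Finsupp.single 0 1) 0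

lemma abs_apply_le (hN : IsCoeffQuasiNorm K N) (f : ℕ →₀ ℝ) (n : ℕ) : |f n| ≤ K * N f := by
  rw [← hN.single n (f n)]
  refine hN.uncond _ _ fun m => ?_
  rw [Finsupp.single_apply]
  split_ifs with h
  · rw [h]
  · simp

lemma erase_le (hN : IsCoeffQuasiNorm K N) (n : ℕ) (f : ℕ →₀ ℝ) : N (f.erase n) ≤ K * N f :=
  hN.uncond _ _ fun m => by
    rw [Finsupp.erase_apply]
    split_ifs <;> simp

lemma sum_le_of_abs_apply_le (hN : IsCoeffQuasiNorm K N) {ι : Type*} [Fintype ι]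
    {p v : ι → ℕ →₀ ℝ} (hv : Pairwise (Disjoint on fun i => (v i).support))
    (h : ∀ i n, |p i n| ≤ |v i n|) : N (∑ i, p i) ≤ K * N (∑ i, v i) :=
  hN.uncond _ _ (abs_sum_apply_le_of_pairwise_disjoint hv h)

lemma sum_smul_erase_le (hN : IsCoeffQuasiNorm K N) {ι : Type*} [Fintype ι]
    {u : ι → ℕ →₀ ℝ} (hu : Pairwise (Disjoint on fun i => (u i).support)) (c : ι → ℝ)
    (k : ι → ℕ) : N (∑ i, c i • (u i).erase (k i)) ≤ K * N (∑ i, c i • u i) := by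
  refine hN.sum_le_of_abs_apply_le
    (fun i j h => (hu h).mono Finsupp.support_smul Finsupp.support_smul) fun i n => ?_
  simp only [Finsupp.smul_apply, Finsupp.erase_apply, smul_eq_mul]
  split_ifs
  · rw [mul_zero, abs_zero]
    exact abs_nonneg _
  · rfl

lemma le_abs_apply_add_erase (hN : IsCoeffQuasiNorm K N)
    (hquasi : ∀ f g, N (f + g) ≤ κ * (N f + N g)) (f : ℕ →₀ ℝ) (n : ℕ) :
    N f ≤ κ * (|f n| + N (f.erase n)) := by
  conv_lhs => rw [← Finsupp.single_add_erase n f]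
  rw [← hN.single n (f n)]
  exact hquasi _ _

end IsCoeffQuasiNorm

lemma IsRightDominant.one_le {K D : ℝ} {N : (ℕ →₀ ℝ) → ℝ} (hdom : IsRightDominant N D)
    (hN : IsCoeffQuasiNorm K N) : 1 ≤ D := by
  have := hdom 1 (fun _ => Finsupp.single 1 1) (fun _ => Finsupp.single 0 1)
    Subsingleton.pairwise Subsingleton.pairwise (by simp)
    (fun _ => by rw [hN.normalized, hN.normalized])
  simpa [hN.normalized] using this

section Endpoints

variable {κ K D : ℝ} {N : (ℕ →₀ ℝ) → ℝ} {M : ℕ} {u : Fin M → ℕ →₀ ℝ}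

theorem norm_sum_smul_le_of_isLeast (hN : IsCoeffQuasiNorm K N)
    (hquasi : ∀ f g, N (f + g) ≤ κ * (N f + N g)) (hdom : IsRightDominant N D)
    (hu : Pairwise (Disjoint on fun m => (u m).support)) {b : ℝ} (hb : 0 ≤ b)
    (hub : ∀ m, N (u m) ≤ b) {j : Fin M → ℕ} (hj : ∀ m, IsLeast ((u m).support : Set ℕ) (j m))
    (c : Fin M → ℝ) :
    N (∑ m, c m • u m) ≤ κ * (K + D) * K * b * N (∑ m, Finsupp.single (j m) (c m)) := by
  have hκ := hN.one_le_of_add_le hquasi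
  have hK := hN.one_le
  have hj_inj := injective_of_mem_support hu fun m => (hj m).1
  set v := ∑ m, Finsupp.single (j m) (c m)
  have hKb : N (∑ m, Finsupp.single (j m) (K * b * c m)) = K * b * N v := by
    have : ∑ m, Finsupp.single (j m) (K * b * c m) = (K * b) • v := by
      simp only [v, Finset.smul_sum, Finsupp.smul_single, smul_eq_mul]
    rw [this, hN.smul, abs_of_nonneg (by positivity)]
  have hhead : N (∑ m, Finsupp.single (j m) (c m * u m (j m))) ≤ K * (K * b * N v) := by
    rw [← hKb]
    refine hN.sum_le_of_abs_apply_le (pairwise_disjoint_support_single hj_inj _) fun m n => ?_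
    rw [Finsupp.single_apply, Finsupp.single_apply]
    split_ifs
    · rw [abs_mul, abs_mul, abs_of_nonneg (by positivity : 0 ≤ K * b), mul_comm]
      gcongr
      exact (hN.abs_apply_le _ _).trans (by gcongr; exact hub m)
    · rfl
  have htail : N (∑ m, c m • (u m).erase (j m)) ≤ D * (K * b * N v) := by
    rw [← hKb]
    refine hdom M _ _ (pairwise_disjoint_support_smul_erase hu _ _)
      (pairwise_disjoint_support_single hj_inj _) (fun m i hi n hn => ?_) fun m => ?_
    · obtain ⟨hnj, hn⟩ := Finsupp.mem_support_smul_erase hn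
      rw [Finset.mem_singleton.mp (Finsupp.support_single_subset hi)]
      exact ((hj m).2 hn).lt_of_ne' hnj
    · rw [hN.smul, hN.single, abs_mul, abs_of_nonneg (by positivity : 0 ≤ K * b), mul_comm]
      gcongr
      exact (hN.erase_le _ _).trans (by gcongr; exact hub m)
  calc N (∑ m, c m • u m)
      = N (∑ m, Finsupp.single (j m) (c m * u m (j m)) + ∑ m, c m • (u m).erase (j m)) := by
        rw [← sum_add_distrib]
        refine congrArg N (sum_congr rfl fun m _ => ?_)
        rw [← smul_eq_mul, ← Finsupp.smul_single, ← smul_add, Finsupp.single_add_erase]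
    _ ≤ κ * (K * (K * b * N v) + D * (K * b * N v)) := (hquasi _ _).trans (by gcongr)
    _ = κ * (K + D) * K * b * N v := by ring

theorem mul_norm_sum_single_le_of_isGreatest (hN : IsCoeffQuasiNorm K N)
    (hquasi : ∀ f g, N (f + g) ≤ κ * (N f + N g)) (hdom : IsRightDominant N D)
    (hu : Pairwise (Disjoint on fun m => (u m).support)) {a : ℝ} (ha : 0 ≤ a)
    (hau : ∀ m, a ≤ N (u m)) {k : Fin M → ℕ}
    (hk : ∀ m, IsGreatest ((u m).support : Set ℕ) (k m)) (c : Fin M → ℝ) :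
    a * N (∑ m, Finsupp.single (k m) (c m)) ≤ κ ^ 2 * K * (1 + D) * N (∑ m, c m • u m) := by
  have hκ := hN.one_le_of_add_le hquasi
  have hk_inj := injective_of_mem_support hu fun m => (hk m).1
  have hcu : Pairwise (Disjoint on fun m => (c m • u m).support) := fun m m' h =>
    (hu h).mono Finsupp.support_smul Finsupp.support_smul
  set w := ∑ m, c m • u m
  have hsplit : ∀ m, a / κ ≤ |u m (k m)| + N ((u m).erase (k m)) := fun m => by
    rw [div_le_iff₀ (by positivity), mul_comm]
    exact (hau m).trans (hN.le_abs_apply_add_erase hquasi _ _)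
  choose x y hx hy hxy using fun m =>
    exists_abs_le_add_eq (by positivity) (abs_nonneg _) (hN.nonneg _) (hsplit m)
  have hhead : N (∑ m, Finsupp.single (k m) (c m * x m)) ≤ K * N w := by
    refine hN.sum_le_of_abs_apply_le hcu fun m n => ?_
    rw [Finsupp.single_apply]
    split_ifs with h
    · rw [← h, Finsupp.smul_apply, smul_eq_mul, abs_mul, abs_mul]
      exact mul_le_mul_of_nonneg_left (hx m) (abs_nonneg _)
    · rw [abs_zero]
      exact abs_nonneg _
  have htail : N (∑ m, Finsupp.single (k m) (c m * y m)) ≤ D * (K * N w) := by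
    refine (hdom M (fun m => Finsupp.single (k m) (c m * y m)) (fun m => c m • (u m).erase (k m))
      (pairwise_disjoint_support_single hk_inj _) (pairwise_disjoint_support_smul_erase hu _ _)
      (fun m i hi n hn => ?_) fun m => ?_).trans
      (mul_le_mul_of_nonneg_left (hN.sum_smul_erase_le hu c k) (by linarith [hdom.one_le hN]))
    · obtain ⟨hik, hi⟩ := Finsupp.mem_support_smul_erase hi
      rw [Finset.mem_singleton.mp (Finsupp.support_single_subset hn)]
      exact ((hk m).2 hi).lt_of_ne hik
    · rw [hN.single, hN.smul, abs_mul]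
      exact mul_le_mul_of_nonneg_left (hy m) (abs_nonneg _)
  have hsum : (a / κ) • ∑ m, Finsupp.single (k m) (c m) =
      ∑ m, Finsupp.single (k m) (c m * x m) + ∑ m, Finsupp.single (k m) (c m * y m) := by
    rw [Finset.smul_sum, ← sum_add_distrib]
    refine sum_congr rfl fun m _ => ?_
    rw [Finsupp.smul_single, ← Finsupp.single_add, ← mul_add, hxy, smul_eq_mul, mul_comm]
  calc a * N (∑ m, Finsupp.single (k m) (c m))
      = κ * N ((a / κ) • ∑ m, Finsupp.single (k m) (c m)) := by
        rw [hN.smul, abs_of_nonneg (by positivity)]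
        field_simp
    _ ≤ κ * (κ * (K * N w + D * (K * N w))) := by
        rw [hsum]
        gcongr
        exact (hquasi _ _).trans (by gcongr)
    _ = κ ^ 2 * K * (1 + D) * N w := by ring

end Endpoints

theorem stmt18_general (κ K D : ℝ)
    (N : (ℕ →₀ ℝ) → ℝ) (hN : IsCoeffQuasiNorm K N)
    (hquasi : ∀ f g : ℕ →₀ ℝ, N (f + g) ≤ κ * (N f + N g))
    (hdom : ∀ (k : ℕ) (f g : Fin k → (ℕ →₀ ℝ)),
      (∀ i j, i ≠ j → Disjoint (f i).support (f j).support) →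
      (∀ i j, i ≠ j → Disjoint (g i).support (g j).support) →
      (∀ i, ∀ m ∈ (g i).support, ∀ n ∈ (f i).support, m < n) →
      (∀ i, N (f i) ≤ N (g i)) →
      N (∑ i, f i) ≤ D * N (∑ i, g i))
    (M : ℕ) (u : Fin M → (ℕ →₀ ℝ)) (hu : ∀ m, u m ≠ 0)
    (hdisj : ∀ i j, i ≠ j → Disjoint (u i).support (u j).support)
    (a b : ℝ)
    (hab : ∀ m, a ≤ N (u m) ∧ N (u m) ≤ b) :
    ∀ c : Fin M → ℝ,
      N (∑ m, c m • u m) ≤ (2 * κ * K ^ 2 * D * b) *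
          N (∑ m, c m • Finsupp.single
            ((u m).support.min' (Finsupp.support_nonempty_iff.mpr (hu m)))
            (1 : ℝ)) ∧
      (a / (2 * κ ^ 2 * K * D)) *
          N (∑ m, c m • Finsupp.single
            ((u m).support.max' (Finsupp.support_nonempty_iff.mpr (hu m)))
            (1 : ℝ)) ≤
        N (∑ m, c m • u m) := by
  intro c
  have hdom : IsRightDominant N D := hdom
  have hu' : Pairwise (Disjoint on fun m => (u m).support) := fun i j h => hdisj i j h
  have hne m : (u m).support.Nonempty := Finsupp.support_nonempty_iff.mpr (hu m)
  have hκ := hN.one_le_of_add_le hquasi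
  have hK := hN.one_le
  have hD := hdom.one_le hN
  have hKD : K + D ≤ 2 * K * D := by nlinarith
  simp only [Finsupp.smul_single_one]
  constructor
  · rcases isEmpty_or_nonempty (Fin M) with hM | ⟨⟨m₀⟩⟩
    · simp [hN.map_zero]
    have hb : 0 ≤ b := (hN.nonneg _).trans (hab m₀).2
    refine (norm_sum_smul_le_of_isLeast hN hquasi hdom hu' hb (fun m => (hab m).2)
      (fun m => Finset.isLeast_min' _ (hne m)) c).trans ?_
    calc κ * (K + D) * K * b * _ = (K + D) * (κ * K * b * _) := by ring
      _ ≤ 2 * K * D * (κ * K * b * _) :=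
        mul_le_mul_of_nonneg_right hKD (mul_nonneg (by positivity) (hN.nonneg _))
      _ = _ := by ring
  · rcases lt_or_ge a 0 with ha | ha
    · exact (mul_nonpos_of_nonpos_of_nonneg (div_nonpos_of_nonpos_of_nonneg ha.le (by positivity))
        (hN.nonneg _)).trans (hN.nonneg _)
    rw [div_mul_eq_mul_div, div_le_iff₀ (by positivity)]
    refine (mul_norm_sum_single_le_of_isGreatest hN hquasi hdom hu' ha (fun m => (hab m).1)
      (fun m => Finset.isGreatest_max' _ (hne m)) c).trans ?_
    calc κ ^ 2 * K * (1 + D) * _ = (1 + D) * (κ ^ 2 * K * _) := by ring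
      _ ≤ 2 * D * (κ ^ 2 * K * _) :=
        mul_le_mul_of_nonneg_right (by linarith) (mul_nonneg (by positivity) (hN.nonneg _))
      _ = _ := by ring

/-- core inequalities of the theorem in Section 6.5: if `N` has
modulus of concavity `κ` and is right `D`-dominant, and `u₁, …, u_M` are nonzero
disjointly supported vectors with `a ≤ N(u_m) ≤ b`, then with
`j_m = min (supp u_m)` and `k_m = max (supp u_m)` one has, for all scalars `c`,
`N(∑ c_m u_m) ≤ 2κK²Db·N(∑ c_m e_{j_m})` and
`N(∑ c_m u_m) ≥ (a/(2κ²KD))·N(∑ c_m e_{k_m})`. -/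
theorem stmt18 (κ K D : ℝ) (hκ : 1 ≤ κ) (hK : 1 ≤ K) (hD : 1 ≤ D)
    (N : (ℕ →₀ ℝ) → ℝ) (hN : IsCoeffQuasiNorm K N)
    (hquasi : ∀ f g : ℕ →₀ ℝ, N (f + g) ≤ κ * (N f + N g))
    (hdom : ∀ (k : ℕ) (f g : Fin k → (ℕ →₀ ℝ)),
      (∀ i j, i ≠ j → Disjoint (f i).support (f j).support) →
      (∀ i j, i ≠ j → Disjoint (g i).support (g j).support) →
      (∀ i, ∀ m ∈ (g i).support, ∀ n ∈ (f i).support, m < n) →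
      (∀ i, N (f i) ≤ N (g i)) →
      N (∑ i, f i) ≤ D * N (∑ i, g i))
    (M : ℕ) (u : Fin M → (ℕ →₀ ℝ)) (hu : ∀ m, u m ≠ 0)
    (hdisj : ∀ i j, i ≠ j → Disjoint (u i).support (u j).support)
    (a b : ℝ) (ha : 0 < a)
    (hab : ∀ m, a ≤ N (u m) ∧ N (u m) ≤ b) :
    ∀ c : Fin M → ℝ,
      N (∑ m, c m • u m) ≤ (2 * κ * K ^ 2 * D * b) *
          N (∑ m, c m • Finsupp.single
            ((u m).support.min' (Finsupp.support_nonempty_iff.mpr (hu m)))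
            (1 : ℝ)) ∧
      (a / (2 * κ ^ 2 * K * D)) *
          N (∑ m, c m • Finsupp.single
            ((u m).support.max' (Finsupp.support_nonempty_iff.mpr (hu m)))
            (1 : ℝ)) ≤
        N (∑ m, c m • u m) :=
  stmt18_general κ K D N hN hquasi hdom M u hu hdisj a b hab
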